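/- There exist no three-player impartial games X and Y such that X is an O-game, Y is a P-game, and X + Y is an N-game. -/
import Mathlib


/-- Three-player impartial games: well-founded game trees. -/
inductive G3 : Type 1 where
  | mk : (ι : Type) → (ι → G3) → G3

namespace G3

/-- The index type of options (moves) of a game. -/
def moves : G3 → Type
  | mk ι _ => ι

/-- The option of a game corresponding to a move. -/
def moveFn : (g : G3) → moves g → G3
  | mk _ f => f

/-- Disjunctive sum: move in exactly one component. -/
noncomputable def add : G3 → G3 → G3 :=
  G3.rec (fun ι f ihf =>
    G3.rec (fun κ g ihg =>
      mk (ι ⊕ κ) (fun x =>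
        match x with
        | Sum.inl i => ihf i (mk κ g)
        | Sum.inr j => ihg j)))

/-- The four outcome types of a three-player impartial game. -/
inductive PType : Type
  | N | O | P | Q
deriving DecidableEq

open Classical in
/-- The type of a game: `N` iff some option is a `P`-game; `O` iff it has at least
one option and all options are `N`-games; `P` iff all options are `O`-games;
`Q` otherwise. -/
noncomputable def typ : G3 → PType
  | mk ι f =>
    if ∃ i, typ (f i) = PType.P then PType.N
    else if Nonempty ι ∧ ∀ i, typ (f i) = PType.N then PType.O
    else if ∀ i, typ (f i) = PType.O then PType.P
    else PType.Q

/-- The Nim heap of size `n`: options are heaps of sizes `0, …, n-1`. -/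
def nim : ℕ → G3
  | n => mk (Fin n) (fun i => nim i)
termination_by n => n
decreasing_by exact i.isLt

/-- The sum of `n` Nim heaps of size 1. -/
noncomputable def ones : ℕ → G3
  | 0 => nim 0
  | n + 1 => add (ones n) (nim 1)

theorem add_mk' (ι : Type) (f : ι → G3) (κ : Type) (g : κ → G3) :
    add (mk ι f) (mk κ g) = mk (ι ⊕ κ) (fun x => match x with
      | Sum.inl i => add (f i) (mk κ g)
      | Sum.inr j => add (mk ι f) (g j)) := rfl

open Classical in
theorem typ_mk (ι : Type) (f : ι → G3) :
    typ (mk ι f) =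
    if ∃ i, typ (f i) = PType.P then PType.N
    else if Nonempty ι ∧ ∀ i, typ (f i) = PType.N then PType.O
    else if ∀ i, typ (f i) = PType.O then PType.P
    else PType.Q := by rw [typ]

theorem typ_N_iff (ι : Type) (f : ι → G3) :
    typ (mk ι f) = PType.N ↔ ∃ i, typ (f i) = PType.P := by
  rw [typ_mk]; split_ifs with h1 h2 h3 <;> simp_all <;> try assumption

theorem typ_O_iff (ι : Type) (f : ι → G3) :
    typ (mk ι f) = PType.O ↔
      (¬ ∃ i, typ (f i) = PType.P) ∧ Nonempty ι ∧ ∀ i, typ (f i) = PType.N := by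
  rw [typ_mk]; split_ifs with h1 h2 h3 <;> simp_all <;> try assumption

theorem typ_P_iff (ι : Type) (f : ι → G3) :
    typ (mk ι f) = PType.P ↔
      (¬ ∃ i, typ (f i) = PType.P) ∧ ¬ (Nonempty ι ∧ ∀ i, typ (f i) = PType.N) ∧
        ∀ i, typ (f i) = PType.O := by
  rw [typ_mk]; split_ifs with h1 h2 h3 <;> simp_all <;> try assumption

/-- `x` is an option of `y`. -/
def isOpt (x y : G3) : Prop := ∃ m : y.moves, y.moveFn m = x

theorem acc_isOpt : ∀ g : G3, Acc isOpt g := by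
  intro g
  induction g with
  | mk ι f ih => exact Acc.intro _ (fun y hy => by obtain ⟨i, hi⟩ := hy; exact hi ▸ ih i)

theorem wf_isOpt : WellFounded isOpt := ⟨acc_isOpt⟩

theorem wf_T : WellFounded (Relation.TransGen isOpt) := wf_isOpt.transGen

/-- The simultaneous statement for the induction. -/
def SS (X Y : G3) : Prop :=
  (typ X = PType.N → typ Y = PType.P → typ (add X Y) ≠ PType.P) ∧
  (typ X = PType.P → typ Y = PType.N → typ (add X Y) ≠ PType.P) ∧
  (typ X = PType.O → typ Y = PType.O → typ (add X Y) ≠ PType.P) ∧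
  (typ X = PType.P → typ Y = PType.P → typ (add X Y) ≠ PType.O)

theorem main : ∀ X Y : G3, SS X Y := by
  intro X
  refine wf_T.induction (C := fun X => ∀ Y, SS X Y) X ?_
  intro X IH1 Y
  refine wf_T.induction (C := fun Y => SS X Y) Y ?_
  intro Y IH2
  obtain ⟨ι, f⟩ := X
  obtain ⟨κ, g⟩ := Y
  refine ⟨?_, ?_, ?_, ?_⟩
  · -- A : N + P ≠ P
    intro hX hY hS
    rw [typ_N_iff] at hX
    obtain ⟨i, hi⟩ := hX
    rw [add_mk', typ_P_iff] at hS
    obtain ⟨-, -, hall⟩ := hS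
    exact (IH1 (f i) (.single ⟨i, rfl⟩) (mk κ g)).2.2.2 hi hY (hall (Sum.inl i))
  · -- A' : P + N ≠ P
    intro hX hY hS
    rw [typ_N_iff] at hY
    obtain ⟨j, hj⟩ := hY
    rw [add_mk', typ_P_iff] at hS
    obtain ⟨-, -, hall⟩ := hS
    exact (IH2 (g j) (.single ⟨j, rfl⟩)).2.2.2 hX hj (hall (Sum.inr j))
  · -- B : O + O ≠ P
    intro hX hY hS
    have hY' := hY
    rw [typ_O_iff] at hX hY'
    obtain ⟨-, ⟨i⟩, hN⟩ := hX
    obtain ⟨-, -, hYN⟩ := hY'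
    rw [add_mk', typ_P_iff] at hS
    obtain ⟨-, -, hall⟩ := hS
    have hO : typ (add (f i) (mk κ g)) = PType.O := hall (Sum.inl i)
    have hNi := hN i
    rcases hfi : f i with ⟨ι', f'⟩
    rw [hfi] at hNi hO
    rw [typ_N_iff] at hNi
    obtain ⟨i', hP'⟩ := hNi
    rw [add_mk', typ_O_iff] at hO
    obtain ⟨-, -, hallN⟩ := hO
    have hNsum : typ (add (f' i') (mk κ g)) = PType.N := hallN (Sum.inl i')
    have hPorig := hP'
    rcases hfi' : f' i' with ⟨ι'', f''⟩
    rw [hfi'] at hP' hNsum hPorig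
    rw [add_mk', typ_N_iff] at hNsum
    obtain ⟨x, hx⟩ := hNsum
    rw [typ_P_iff] at hP'
    obtain ⟨-, -, hallO⟩ := hP'
    have s1 : isOpt (f i) (mk ι f) := ⟨i, rfl⟩
    have s2 : isOpt (mk ι'' f'') (f i) := by rw [hfi]; exact ⟨i', hfi'⟩
    have t2 : Relation.TransGen isOpt (mk ι'' f'') (mk ι f) :=
      Relation.TransGen.tail (.single s2) s1
    cases x with
    | inl k =>
        have s3 : isOpt (f'' k) (mk ι'' f'') := ⟨k, rfl⟩
        have t3 : Relation.TransGen isOpt (f'' k) (mk ι f) :=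
          Relation.TransGen.head s3 t2
        exact (IH1 (f'' k) t3 (mk κ g)).2.2.1 (hallO k) hY hx
    | inr j =>
        exact (IH1 (mk ι'' f'') t2 (g j)).2.1 hPorig (hYN j) hx
  · -- C : P + P ≠ O
    intro hX hY hS
    have hXP := hX
    have hYP := hY
    rw [typ_P_iff] at hX hY
    obtain ⟨-, -, hXO⟩ := hX
    obtain ⟨-, -, hYO⟩ := hY
    rw [add_mk', typ_O_iff] at hS
    obtain ⟨-, hne, hallN⟩ := hS
    obtain ⟨i | j⟩ := hne
    · have hN : typ (add (f i) (mk κ g)) = PType.N := hallN (Sum.inl i)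
      have hOi := hXO i
      rcases hfi : f i with ⟨ι', f'⟩
      rw [hfi] at hOi hN
      rw [typ_O_iff] at hOi
      obtain ⟨-, -, hfN⟩ := hOi
      rw [add_mk', typ_N_iff] at hN
      obtain ⟨x, hx⟩ := hN
      have s1 : isOpt (mk ι' f') (mk ι f) := ⟨i, hfi⟩
      cases x with
      | inl i'' =>
          have s3 : isOpt (f' i'') (mk ι' f') := ⟨i'', rfl⟩
          have t3 : Relation.TransGen isOpt (f' i'') (mk ι f) :=
            Relation.TransGen.head s3 (.single s1)
          exact (IH1 (f' i'') t3 (mk κ g)).1 (hfN i'') hYP hx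
      | inr j =>
          have hO' : typ (mk ι' f') = PType.O := hfi ▸ hXO i
          exact (IH1 (mk ι' f') (.single s1) (g j)).2.2.1 hO' (hYO j) hx
    · have hN : typ (add (mk ι f) (g j)) = PType.N := hallN (Sum.inr j)
      have hOj := hYO j
      rcases hgj : g j with ⟨κ', g'⟩
      rw [hgj] at hOj hN
      rw [typ_O_iff] at hOj
      obtain ⟨-, -, hgN⟩ := hOj
      rw [add_mk', typ_N_iff] at hN
      obtain ⟨x, hx⟩ := hN
      cases x with
      | inl i =>
          have hO' : typ (mk κ' g') = PType.O := by
            rw [← hgj]; exact hYO j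
          exact (IH1 (f i) (.single ⟨i, rfl⟩) (mk κ' g')).2.2.1 (hXO i) hO' hx
      | inr j' =>
          have s1 : isOpt (mk κ' g') (mk κ g) := ⟨j, hgj⟩
          have s3 : isOpt (g' j') (mk κ' g') := ⟨j', rfl⟩
          have t3 : Relation.TransGen isOpt (g' j') (mk κ g) :=
            Relation.TransGen.head s3 (.single s1)
          exact (IH2 (g' j') t3).2.1 hXP (hgN j') hx

theorem no_O_plus_P_eq_N :
    ¬ ∃ X Y : G3, typ X = PType.O ∧ typ Y = PType.P ∧ typ (add X Y) = PType.N := by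
  rintro ⟨⟨ι, f⟩, ⟨κ, g⟩, hX, hY, hS⟩
  have hX' := hX
  have hY' := hY
  rw [typ_O_iff] at hX'
  obtain ⟨-, -, hfN⟩ := hX'
  rw [typ_P_iff] at hY'
  obtain ⟨-, -, hgO⟩ := hY'
  rw [add_mk', typ_N_iff] at hS
  obtain ⟨x, hx⟩ := hS
  cases x with
  | inl i => exact (main (f i) (mk κ g)).1 (hfN i) hY hx
  | inr j => exact (main (mk ι f) (g j)).2.2.1 hX (hgO j) hx

end G3
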